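/- The unions of distinct overlap classes form a laminar family: if K1 and K2 are distinct overlap classes with unions U1 and U2, then U1 ⊆ U2, or U2 ⊆ U1, or U1 ∩ U2 = ∅. -/

import Mathlib

def Overlaps {α : Type*} [DecidableEq α] (A B : Finset α) : Prop :=
  (A ∩ B).Nonempty ∧ (A \ B).Nonempty ∧ (B \ A).Nonempty

def OverlapRel {α : Type*} [DecidableEq α] (S : Finset (Finset α))
    (A B : Finset α) : Prop :=
  A ∈ S ∧ B ∈ S ∧ Overlaps A B

def OverlapClass {α : Type*} [DecidableEq α] (S : Finset (Finset α))
    (B : Finset α) : Set (Finset α) :=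
  {X | X ∈ S ∧ Relation.EqvGen (OverlapRel S) B X}

/-!
Two sets from different overlap classes never overlap, so if they meet they are nested, say
`A₀ ⊆ B₀`. A member of `A₀`'s class that overlaps a subset of `B₀` meets `B₀` without
overlapping it, and cannot contain `B₀`; hence it is again a subset of `B₀`. Following overlap
chains, the whole class of `A₀` lies in `B₀`, so its union lies in the union of `B₀`'s class.
-/

theorem Relation.EqvGen.iff_of_rel_iff {β : Type*} {r : β → β → Prop} {p : β → Prop} {c a b : β}
    (h : ∀ x y, EqvGen r c x → r x y → (p x ↔ p y)) (hca : EqvGen r c a) (hab : EqvGen r a b) :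
    p a ↔ p b := by
  have e := EqvGen.is_equivalence r
  induction hab with
  | rel x y hxy => exact h x y hca hxy
  | refl => rfl
  | symm x y hxy ih => exact (ih (e.trans hca (e.symm hxy))).symm
  | trans x y z hxy _ ih₁ ih₂ => exact (ih₁ hca).trans (ih₂ (e.trans hca hxy))

section Overlaps

variable {α : Type*} [DecidableEq α] {A B U V : Finset α}

theorem Overlaps.symm (h : Overlaps A B) : Overlaps B A :=
  ⟨by rw [Finset.inter_comm]; exact h.1, h.2.2, h.2.1⟩

theorem subset_or_subset_of_not_overlaps (hAB : (A ∩ B).Nonempty) (h : ¬Overlaps A B) :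
    A ⊆ B ∨ B ⊆ A := by
  simp only [Overlaps, hAB, Finset.sdiff_nonempty, true_and, not_and, not_not] at h
  exact or_iff_not_imp_left.2 h

theorem Overlaps.subset_of_subset (h : Overlaps U V) (hU : U ⊆ B) (hV : ¬Overlaps V B) :
    V ⊆ B := by
  have hVB : (V ∩ B).Nonempty :=
    h.1.mono (by rw [Finset.inter_comm]; exact Finset.inter_subset_inter subset_rfl hU)
  refine (subset_or_subset_of_not_overlaps hVB hV).resolve_right fun hBV => ?_
  exact Finset.sdiff_nonempty.1 h.2.1 (hU.trans hBV)

end Overlaps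

section OverlapClass

variable {α : Type*} [DecidableEq α] {S : Finset (Finset α)} {A A₀ B₀ B₁ B₂ : Finset α}

theorem overlapClass_eq_of_overlaps (hA : A ∈ OverlapClass S B₁) (hB : B₀ ∈ OverlapClass S B₂)
    (h : Overlaps A B₀) : OverlapClass S B₁ = OverlapClass S B₂ := by
  have e := Relation.EqvGen.is_equivalence (OverlapRel S)
  have h₁₂ : Relation.EqvGen (OverlapRel S) B₁ B₂ :=
    e.trans (e.trans hA.2 (.rel _ _ ⟨hA.1, hB.1, h⟩)) (e.symm hB.2)
  ext X
  exact and_congr_right fun _ => ⟨e.trans (e.symm h₁₂), e.trans h₁₂⟩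

theorem subset_of_forall_not_overlaps (hK : ∀ X ∈ OverlapClass S B₁, ¬Overlaps X B₀)
    (hA₀ : A₀ ∈ OverlapClass S B₁) (hsub : A₀ ⊆ B₀) (hA : A ∈ OverlapClass S B₁) : A ⊆ B₀ := by
  have e := Relation.EqvGen.is_equivalence (OverlapRel S)
  refine (Relation.EqvGen.iff_of_rel_iff (p := (· ⊆ B₀)) ?_ hA₀.2
    (e.trans (e.symm hA₀.2) hA.2)).1 hsub
  rintro X Y hX ⟨hXS, hYS, hXY⟩
  have hY : Relation.EqvGen (OverlapRel S) B₁ Y := e.trans hX (.rel _ _ ⟨hXS, hYS, hXY⟩)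
  exact ⟨fun h => hXY.subset_of_subset h (hK Y ⟨hYS, hY⟩),
    fun h => hXY.symm.subset_of_subset h (hK X ⟨hXS, hX⟩)⟩

theorem iUnion_overlapClass_subset (hne : OverlapClass S B₁ ≠ OverlapClass S B₂)
    (hA₀ : A₀ ∈ OverlapClass S B₁) (hB₀ : B₀ ∈ OverlapClass S B₂) (hsub : A₀ ⊆ B₀) :
    (⋃ A ∈ OverlapClass S B₁, (A : Set α)) ⊆ ⋃ B ∈ OverlapClass S B₂, (B : Set α) := by
  have hK : ∀ X ∈ OverlapClass S B₁, ¬Overlaps X B₀ := fun X hX h =>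
    hne (overlapClass_eq_of_overlaps hX hB₀ h)
  refine Set.iUnion₂_subset fun A hA => ?_
  exact (Finset.coe_subset.2 (subset_of_forall_not_overlaps hK hA₀ hsub hA)).trans
    (Set.subset_biUnion_of_mem (u := fun B : Finset α => (B : Set α)) hB₀)

end OverlapClass

/-- Unions of distinct overlap classes form a laminar family. -/
theorem stmt8 {α : Type*} [DecidableEq α] (S : Finset (Finset α))
    (K1 K2 : Set (Finset α))
    (h1 : ∃ B ∈ S, K1 = OverlapClass S B)
    (h2 : ∃ B ∈ S, K2 = OverlapClass S B)
    (hne : K1 ≠ K2) :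
    (⋃ A ∈ K1, (A : Set α)) ⊆ (⋃ A ∈ K2, (A : Set α)) ∨
    (⋃ A ∈ K2, (A : Set α)) ⊆ (⋃ A ∈ K1, (A : Set α)) ∨
    (⋃ A ∈ K1, (A : Set α)) ∩ (⋃ A ∈ K2, (A : Set α)) = ∅ := by
  obtain ⟨B₁, -, rfl⟩ := h1
  obtain ⟨B₂, -, rfl⟩ := h2
  rcases Set.eq_empty_or_nonempty ((⋃ A ∈ OverlapClass S B₁, (A : Set α)) ∩
      ⋃ A ∈ OverlapClass S B₂, (A : Set α)) with hdisj | ⟨x, hx₁, hx₂⟩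
  · exact Or.inr (Or.inr hdisj)
  simp only [Set.mem_iUnion] at hx₁ hx₂
  obtain ⟨A₀, hA₀, hxA₀⟩ := hx₁
  obtain ⟨B₀, hB₀, hxB₀⟩ := hx₂
  have hmeet : (A₀ ∩ B₀).Nonempty := ⟨x, Finset.mem_inter.2 ⟨hxA₀, hxB₀⟩⟩
  rcases subset_or_subset_of_not_overlaps hmeet
      (fun h => hne (overlapClass_eq_of_overlaps hA₀ hB₀ h)) with hsub | hsub
  · exact Or.inl (iUnion_overlapClass_subset hne hA₀ hB₀ hsub)
  · exact Or.inr (Or.inl (iUnion_overlapClass_subset hne.symm hB₀ hA₀ hsub))
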